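/- A shift X ∈ S^d is of finite type if and only if there exists ε > 0 such that every shift Z ∈ S^d with δ_H(Z,X) < ε satisfies Z ⊆ X. -/

import Mathlib

/-- The group `ℤ^d`. -/
abbrev ZD (d : ℕ) := Fin d → ℤ

/-- A configuration is a map `ℤ^d → ℤ`. -/
abbrev Config (d : ℕ) := ZD d → ℤ

/-- The shift map `σ^u`, defined by `σ^u(x)_v = x_{u+v}`. -/
def shiftMap {d : ℕ} (u : ZD d) (x : Config d) : Config d := fun v => x (u + v)

/-- The sup norm `‖·‖_∞` on `ℤ^d`, valued in `ℕ`. -/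
def normInf {d : ℕ} (n : ZD d) : ℕ := Finset.univ.sup fun i => (n i).natAbs

open Classical in
/-- The metric `δ` on configurations: `δ(x,y) = 2^{-min{‖n‖_∞ : x_n ≠ y_n}}`, `δ(x,x) = 0`. -/
noncomputable def deltaDist {d : ℕ} (x y : Config d) : ℝ :=
  if x = y then 0
  else (2 : ℝ) ^ (-((sInf {m : ℕ | ∃ n : ZD d, normInf n = m ∧ x n ≠ y n} : ℕ) : ℤ))

/-- The closure of a set of configurations with respect to the metric `δ`. -/
def deltaClosure {d : ℕ} (A : Set (Config d)) : Set (Config d) :=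
  {x | ∀ ε : ℝ, 0 < ε → ∃ a ∈ A, deltaDist x a < ε}

/-- A set of configurations is closed for `δ` when it contains all its limit points. -/
def IsDeltaClosed {d : ℕ} (A : Set (Config d)) : Prop := deltaClosure A ⊆ A

/-- A `d`-dimensional shift: a nonempty set of configurations over a common finite
alphabet, closed for `δ` and invariant under every shift map. -/
def IsShift {d : ℕ} (X : Set (Config d)) : Prop :=
  X.Nonempty ∧ (∃ A : Finset ℤ, ∀ x ∈ X, ∀ v : ZD d, x v ∈ A) ∧ IsDeltaClosed X ∧
    ∀ u : ZD d, ∀ x ∈ X, shiftMap u x ∈ X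

/-- The Hausdorff metric `δ_H` on the space of shifts. -/
noncomputable def deltaH {d : ℕ} (X Z : Set (Config d)) : ℝ :=
  max (⨆ x : X, ⨅ z : Z, deltaDist (x : Config d) (z : Config d))
      (⨆ z : Z, ⨅ x : X, deltaDist (x : Config d) (z : Config d))

/-- A subsystem of a shift `X`: a nonempty closed shift-invariant subset of `X`. -/
def IsSubsystem {d : ℕ} (Z X : Set (Config d)) : Prop :=
  Z.Nonempty ∧ Z ⊆ X ∧ IsDeltaClosed Z ∧ ∀ u : ZD d, ∀ z ∈ Z, shiftMap u z ∈ Z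

/-- A maximal subsystem of `X`: a proper subsystem such that any subsystem strictly
between it and `X` equals `X`. -/
def IsMaximalSubsystem {d : ℕ} (Z X : Set (Config d)) : Prop :=
  IsSubsystem Z X ∧ Z ≠ X ∧ ∀ Z', IsSubsystem Z' X → Z ⊂ Z' → Z' = X

/-- An outcast of `X`: a proper subsystem contained in no maximal subsystem of `X`. -/
def IsOutcast {d : ℕ} (Z X : Set (Config d)) : Prop :=
  IsSubsystem Z X ∧ Z ≠ X ∧ ∀ M, IsMaximalSubsystem M X → ¬ Z ⊆ M

/-- A pattern with finite support `U` (given by the values of `p` on `U`) appears in the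
configuration `x`. -/
def PatternAppears {d : ℕ} (U : Finset (ZD d)) (p : ZD d → ℤ) (x : Config d) : Prop :=
  ∃ u : ZD d, ∀ v ∈ U, x (u + v) = p v

/-- The set of configurations over the alphabet `A` avoiding every pattern in `F`. -/
def XofF {d : ℕ} (A : Finset ℤ) (F : Set (Finset (ZD d) × (ZD d → ℤ))) : Set (Config d) :=
  {x | (∀ v : ZD d, x v ∈ A) ∧ ∀ q ∈ F, ¬ PatternAppears q.1 q.2 x}

/-- A shift of finite type: defined by a finite alphabet and a finite set of forbidden
patterns. -/
def IsSFT {d : ℕ} (X : Set (Config d)) : Prop :=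
  ∃ (A : Finset ℤ) (F : Finset (Finset (ZD d) × (ZD d → ℤ))), X = XofF A (F : Set _)

/-- `X` is an isolated point of the subspace `S` (with the Hausdorff metric `δ_H`). -/
def IsolatedIn {d : ℕ} (S : Set (Set (Config d))) (X : Set (Config d)) : Prop :=
  X ∈ S ∧ ∃ ε : ℝ, 0 < ε ∧ ∀ Z ∈ S, deltaH X Z < ε → Z = X

/-- The orbit of a configuration under the shift action. -/
def orbit {d : ℕ} (x : Config d) : Set (Config d) := {y | ∃ u : ZD d, y = shiftMap u x}

/-- A shift is transitive when some point has dense orbit. -/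
def IsTransitive {d : ℕ} (X : Set (Config d)) : Prop :=
  IsShift X ∧ ∃ x ∈ X, X ⊆ deltaClosure (orbit x)

/-- A shift is minimal when its only subsystem is itself. -/
def IsMinimalShift {d : ℕ} (X : Set (Config d)) : Prop :=
  IsShift X ∧ ∀ Z, IsSubsystem Z X → Z = X

/-!
If `X` is defined by forbidden patterns supported in the ball of radius `r`, a shift `Z` with
`δ_H(Z, X) < 2^{-r}` has every `r`-window of each of its points appearing in `X`, so `Z` avoids
the forbidden patterns as well. Conversely, given `ε`, pick `r` with `2^{-r} < ε` and forbid
every `r`-window over the alphabet of `X` that does not appear in `X`. The resulting shift of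
finite type `Y` contains `X`, and every point of `Y` agrees on its `r`-window with a point of `X`,
so `δ_H(Y, X) ≤ 2^{-r-1} < ε`; hence `Y ⊆ X`, i.e. `X = Y`.
-/

section Metric

variable {d : ℕ}

@[simp]
lemma deltaDist_self (x : Config d) : deltaDist x x = 0 := by simp [deltaDist]

lemma deltaDist_nonneg (x y : Config d) : 0 ≤ deltaDist x y := by
  unfold deltaDist
  split <;> positivity

lemma deltaDist_le_one (x y : Config d) : deltaDist x y ≤ 1 := by
  unfold deltaDist
  split
  · exact zero_le_one
  · exact zpow_le_one_of_nonpos₀ one_le_two (by simp)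

lemma bddBelow_range_deltaDist {ι : Type*} (f g : ι → Config d) :
    BddBelow (Set.range fun i => deltaDist (f i) (g i)) :=
  ⟨0, by rintro _ ⟨i, rfl⟩; exact deltaDist_nonneg _ _⟩

@[simp]
lemma normInf_zero : normInf (0 : ZD d) = 0 := by simp [normInf]

lemma eq_of_deltaDist_lt_zpow {x y : Config d} {k : ℕ}
    (h : deltaDist x y < (2 : ℝ) ^ (-(k : ℤ))) {n : ZD d} (hn : normInf n ≤ k) : x n = y n := by
  by_contra hne
  have hxy : x ≠ y := fun hxy => hne (hxy ▸ rfl)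
  rw [deltaDist, if_neg hxy, zpow_lt_zpow_iff_right₀ one_lt_two] at h
  have := Nat.sInf_le (show normInf n ∈ {m | ∃ n : ZD d, normInf n = m ∧ x n ≠ y n} from
    ⟨n, rfl, hne⟩)
  omega

lemma deltaDist_le_zpow_of_eq {x y : Config d} {k : ℕ}
    (h : ∀ n : ZD d, normInf n ≤ k → x n = y n) :
    deltaDist x y ≤ (2 : ℝ) ^ (-(k : ℤ) - 1) := by
  unfold deltaDist
  split_ifs with hxy
  · positivity
  apply zpow_le_zpow_right₀ one_le_two
  obtain ⟨n₀, hn₀⟩ := Function.ne_iff.mp hxy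
  have : k + 1 ≤ sInf {m | ∃ n : ZD d, normInf n = m ∧ x n ≠ y n} := by
    refine le_csInf ⟨normInf n₀, n₀, rfl, hn₀⟩ ?_
    rintro m ⟨n, rfl, hne⟩
    by_contra! hlt
    exact hne (h n (by omega))
  omega

lemma exists_deltaDist_lt_of_deltaH_lt {Z X : Set (Config d)} {ε : ℝ} (hX : X.Nonempty)
    (h : deltaH Z X < ε) {w : Config d} (hw : w ∈ Z) : ∃ x ∈ X, deltaDist w x < ε := by
  obtain ⟨x₀, hx₀⟩ := hX
  have : Nonempty X := ⟨⟨x₀, hx₀⟩⟩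
  have hbddAbove : BddAbove (Set.range fun z : Z => ⨅ x : X, deltaDist (z : Config d) x) :=
    ⟨1, by
      rintro _ ⟨z, rfl⟩
      exact (ciInf_le (bddBelow_range_deltaDist _ _) ⟨x₀, hx₀⟩).trans (deltaDist_le_one _ _)⟩
  have hinf : ⨅ x : X, deltaDist w x < ε :=
    ((le_ciSup hbddAbove ⟨w, hw⟩).trans (le_max_left _ _)).trans_lt h
  obtain ⟨x, hx⟩ := exists_lt_of_ciInf_lt hinf
  exact ⟨x, x.2, hx⟩

lemma deltaH_le_of_subset {X Y : Set (Config d)} {c : ℝ} (hc : 0 ≤ c) (hXY : X ⊆ Y)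
    (hclose : ∀ y ∈ Y, ∃ x ∈ X, deltaDist y x ≤ c) : deltaH Y X ≤ c := by
  refine max_le (Real.iSup_le (fun y => ?_) hc) (Real.iSup_le (fun x => ?_) hc)
  · obtain ⟨x, hx, hyx⟩ := hclose y y.2
    exact ciInf_le_of_le (bddBelow_range_deltaDist _ _) ⟨x, hx⟩ hyx
  · exact ciInf_le_of_le (bddBelow_range_deltaDist _ _) ⟨x, hXY x.2⟩ (by simpa using hc)

lemma exists_zpow_two_lt {ε : ℝ} (hε : 0 < ε) : ∃ r : ℕ, (2 : ℝ) ^ (-(r : ℤ)) < ε := by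
  obtain ⟨r, hr⟩ := exists_pow_lt_of_lt_one hε (by norm_num : (2⁻¹ : ℝ) < 1)
  exact ⟨r, by simpa [zpow_neg, inv_pow] using hr⟩

end Metric

section PatternShift

variable {d : ℕ}

lemma XofF_isDeltaClosed (A : Finset ℤ) (F : Set (Finset (ZD d) × (ZD d → ℤ))) :
    IsDeltaClosed (XofF A F) := by
  intro x hx
  constructor
  · intro v
    obtain ⟨a, ha, hxa⟩ := hx ((2 : ℝ) ^ (-(normInf v : ℤ))) (by positivity)
    rw [eq_of_deltaDist_lt_zpow hxa le_rfl]
    exact ha.1 v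
  · rintro q hq ⟨u, hu⟩
    obtain ⟨a, ha, hxa⟩ :=
      hx ((2 : ℝ) ^ (-(q.1.sup fun v => normInf (u + v) : ℕ) : ℤ)) (by positivity)
    refine ha.2 q hq ⟨u, fun v hv => ?_⟩
    rw [← eq_of_deltaDist_lt_zpow hxa (Finset.le_sup (f := fun v => normInf (u + v)) hv)]
    exact hu v hv

lemma shiftMap_mem_XofF {A : Finset ℤ} {F : Set (Finset (ZD d) × (ZD d → ℤ))} (u : ZD d)
    {x : Config d} (hx : x ∈ XofF A F) : shiftMap u x ∈ XofF A F := by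
  refine ⟨fun v => hx.1 (u + v), ?_⟩
  rintro q hq ⟨w, hw⟩
  exact hx.2 q hq ⟨u + w, fun v hv => by rw [add_assoc]; exact hw v hv⟩

lemma isShift_XofF {A : Finset ℤ} {F : Set (Finset (ZD d) × (ZD d → ℤ))}
    (hne : (XofF A F).Nonempty) : IsShift (XofF A F) :=
  ⟨hne, ⟨A, fun _ hx v => hx.1 v⟩, XofF_isDeltaClosed A F, fun u _ hx => shiftMap_mem_XofF u hx⟩

lemma mem_XofF_of_forall_shiftMap_close {A : Finset ℤ} {F : Set (Finset (ZD d) × (ZD d → ℤ))}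
    {r : ℕ} (hF : ∀ q ∈ F, ∀ v ∈ q.1, normInf v ≤ r) {w : Config d}
    (hw : ∀ u, ∃ x ∈ XofF A F, deltaDist (shiftMap u w) x < (2 : ℝ) ^ (-(r : ℤ))) :
    w ∈ XofF A F := by
  constructor
  · intro v
    obtain ⟨x, hx, hwx⟩ := hw v
    have h := eq_of_deltaDist_lt_zpow hwx (n := 0) (by simp)
    simp only [shiftMap, add_zero] at h
    exact h ▸ hx.1 0
  · rintro q hq ⟨u, hu⟩
    obtain ⟨x, hx, hwx⟩ := hw u
    refine hx.2 q hq ⟨0, fun v hv => ?_⟩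
    rw [zero_add, ← eq_of_deltaDist_lt_zpow hwx (hF q hq v hv)]
    exact hu v hv

lemma subset_XofF_of_deltaH_lt {A : Finset ℤ} {F : Set (Finset (ZD d) × (ZD d → ℤ))} {r : ℕ}
    (hF : ∀ q ∈ F, ∀ v ∈ q.1, normInf v ≤ r) (hne : (XofF A F).Nonempty) {Z : Set (Config d)}
    (hZ : ∀ u : ZD d, ∀ z ∈ Z, shiftMap u z ∈ Z) (hZX : deltaH Z (XofF A F) < (2 : ℝ) ^ (-(r : ℤ))) :
    Z ⊆ XofF A F := fun _ hw =>
  mem_XofF_of_forall_shiftMap_close hF fun u =>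
    exists_deltaDist_lt_of_deltaH_lt hne hZX (hZ u _ hw)

end PatternShift

section Windows

variable {d : ℕ}

noncomputable def supBall (d r : ℕ) : Finset (ZD d) :=
  Fintype.piFinset fun _ => Finset.Icc (-(r : ℤ)) r

lemma mem_supBall {r : ℕ} {n : ZD d} : n ∈ supBall d r ↔ normInf n ≤ r := by
  simp only [supBall, Fintype.mem_piFinset, Finset.mem_Icc, normInf, Finset.sup_le_iff,
    Finset.mem_univ, true_implies]
  exact forall_congr' fun i => by omega

open Classical in
/-- Patterns on `B` over `A`, encoded as configurations vanishing outside `B`. -/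
noncomputable def patternsOn (A : Finset ℤ) (B : Finset (ZD d)) : Finset (Config d) :=
  (B.pi fun _ => A).image fun f v => if h : v ∈ B then f v h else 0

lemma restrict_mem_patternsOn {A : Finset ℤ} {y : Config d} (hy : ∀ v, y v ∈ A)
    (B : Finset (ZD d)) : (fun v => if v ∈ B then y v else 0) ∈ patternsOn A B := by
  classical
  refine Finset.mem_image.mpr ⟨fun v _ => y v, Finset.mem_pi.mpr fun v _ => hy v, ?_⟩
  funext v
  split_ifs <;> rfl

open Classical in
noncomputable def missingWindows (A : Finset ℤ) (X : Set (Config d)) (r : ℕ) :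
    Finset (Finset (ZD d) × (ZD d → ℤ)) :=
  ((patternsOn A (supBall d r)).filter fun p => ∀ x ∈ X, ¬ PatternAppears (supBall d r) p x).image
    (supBall d r, ·)

lemma mem_missingWindows {A : Finset ℤ} {X : Set (Config d)} {r : ℕ}
    {q : Finset (ZD d) × (ZD d → ℤ)} :
    q ∈ missingWindows A X r ↔ ∃ p ∈ patternsOn A (supBall d r),
      (∀ x ∈ X, ¬ PatternAppears (supBall d r) p x) ∧ (supBall d r, p) = q := by
  simp [missingWindows, and_assoc]

variable {A : Finset ℤ} {X : Set (Config d)}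

lemma subset_XofF_missingWindows (hA : ∀ x ∈ X, ∀ v, x v ∈ A) (r : ℕ) :
    X ⊆ XofF A (missingWindows A X r : Set _) := by
  refine fun x hx => ⟨hA x hx, fun q hq hxq => ?_⟩
  obtain ⟨p, -, hp, rfl⟩ := mem_missingWindows.mp hq
  exact hp x hx hxq

lemma exists_shiftMap_eq_of_mem_XofF_missingWindows {r : ℕ} {y : Config d}
    (hy : y ∈ XofF A (missingWindows A X r : Set _)) :
    ∃ x ∈ X, ∃ u, ∀ n, normInf n ≤ r → y n = shiftMap u x n := by
  classical
  set p : Config d := fun v => if v ∈ supBall d r then y v else 0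
  have hyp : PatternAppears (supBall d r) p y := ⟨0, fun v hv => by simp [p, hv]⟩
  have hnotMissing : ¬ ∀ x ∈ X, ¬ PatternAppears (supBall d r) p x := fun hall =>
    hy.2 _ (mem_missingWindows.mpr ⟨p, restrict_mem_patternsOn hy.1 _, hall, rfl⟩) hyp
  push Not at hnotMissing
  obtain ⟨x, hx, u, hu⟩ := hnotMissing
  refine ⟨x, hx, u, fun n hn => ?_⟩
  have hnB := mem_supBall.mpr hn
  simp [shiftMap, hu n hnB, p, hnB]

lemma deltaH_XofF_missingWindows_le (hA : ∀ x ∈ X, ∀ v, x v ∈ A)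
    (hX : ∀ u : ZD d, ∀ x ∈ X, shiftMap u x ∈ X) (r : ℕ) :
    deltaH (XofF A (missingWindows A X r : Set _)) X ≤ (2 : ℝ) ^ (-(r : ℤ) - 1) :=
  deltaH_le_of_subset (by positivity) (subset_XofF_missingWindows hA r) fun _ hy =>
    let ⟨x, hx, u, hyx⟩ := exists_shiftMap_eq_of_mem_XofF_missingWindows hy
    ⟨shiftMap u x, hX u x hx, deltaDist_le_zpow_of_eq hyx⟩

end Windows

theorem SFT_iff_neighborhood_of_subsystems_general
    (d : ℕ) (X : Set (Config d)) (hX : IsShift X) :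
    IsSFT X ↔ ∃ ε : ℝ, 0 < ε ∧
      ∀ Z : Set (Config d), IsShift Z → deltaH Z X < ε → Z ⊆ X := by
  constructor
  · rintro ⟨A, F, rfl⟩
    have hF : ∀ q ∈ F, ∀ v ∈ q.1, normInf v ≤ F.sup fun q => q.1.sup normInf :=
      fun q hq v hv => (Finset.le_sup hv).trans (Finset.le_sup (f := fun q => q.1.sup normInf) hq)
    exact ⟨_, by positivity, fun Z hZ => subset_XofF_of_deltaH_lt hF hX.1 hZ.2.2.2⟩
  · rintro ⟨ε, hε, hsub⟩
    obtain ⟨hne, ⟨A, hA⟩, -, hshift⟩ := hX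
    obtain ⟨r, hr⟩ := exists_zpow_two_lt hε
    have hXY := subset_XofF_missingWindows hA r
    have hYX : deltaH (XofF A (missingWindows A X r : Set _)) X < ε :=
      (deltaH_XofF_missingWindows_le hA hshift r).trans_lt <|
        (zpow_lt_zpow_right₀ one_lt_two (by omega)).trans hr
    exact ⟨A, missingWindows A X r, hXY.antisymm (hsub _ (isShift_XofF (hne.mono hXY)) hYX)⟩

/-- A shift `X` is of finite type iff there exists `ε > 0` such that every
shift `Z` with `δ_H(Z,X) < ε` satisfies `Z ⊆ X`. -/
theorem SFT_iff_neighborhood_of_subsystems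
    (d : ℕ) (hd : 1 ≤ d) (X : Set (Config d)) (hX : IsShift X) :
    IsSFT X ↔ ∃ ε : ℝ, 0 < ε ∧
      ∀ Z : Set (Config d), IsShift Z → deltaH Z X < ε → Z ⊆ X :=
  SFT_iff_neighborhood_of_subsystems_general d X hX
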